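/- Kronecker scaling lemma (generalized DG-scaling): let X*, Y*, Z* be symmetric n×n real matrices, D a symmetric positive definite 2×2 matrix, and G a skew-symmetric 2×2 matrix. Define Θ as the block matrix [[X*⊗D, Y*⊗D + I⊗G],[Y*⊗D - I⊗G, Z*⊗D]]. Then for every symmetric n×n matrix Δ satisfying [I, Δ]·[[X*,Y*],[Y*,Z*]]·[I;Δ] ⪯ 0, it holds that [I, Δ⊗I₂]·Θ·[I; Δ⊗I₂] ⪯ 0. -/

import Mathlib

/-! The cross terms `(1 ⊗ G)(Δ ⊗ 1)` and `(Δ ⊗ 1)(1 ⊗ G)` both equal `Δ ⊗ G` and enter with opposite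
signs, so `G` drops out and the quadratic form of `Θ` at `Δ ⊗ 1` is the Kronecker product of the
quadratic form `X + ΔY + YΔ + ΔZΔ` with `D`. Since `D ⪰ 0`, tensoring with `D` preserves `⪯ 0`. -/

open Matrix Kronecker

namespace Matrix

variable {α : Type*} {l m n p : Type*}

theorem neg_kronecker [Ring α] (A : Matrix l m α) (B : Matrix n p α) :
    (-A) ⊗ₖ B = -(A ⊗ₖ B) := by
  ext i j
  simp only [kroneckerMap_apply, neg_apply, neg_mul]

variable [CommRing α] [Fintype m] [Fintype n] [DecidableEq m] [DecidableEq n]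

theorem one_kronecker_mul_kronecker_one (A : Matrix m m α) (B : Matrix n n α) :
    ((1 : Matrix m m α) ⊗ₖ B) * (A ⊗ₖ (1 : Matrix n n α)) = A ⊗ₖ B := by
  rw [← mul_kronecker_mul, Matrix.one_mul, Matrix.mul_one]

theorem kronecker_one_mul_one_kronecker (A : Matrix m m α) (B : Matrix n n α) :
    (A ⊗ₖ (1 : Matrix n n α)) * ((1 : Matrix m m α) ⊗ₖ B) = A ⊗ₖ B := by
  rw [← mul_kronecker_mul, Matrix.one_mul, Matrix.mul_one]

theorem quadForm_kronecker_one (X Y Z Δ : Matrix m m α) (D G : Matrix n n α) :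
    X ⊗ₖ D + (Y ⊗ₖ D + (1 : Matrix m m α) ⊗ₖ G) * (Δ ⊗ₖ (1 : Matrix n n α))
        + (Δ ⊗ₖ (1 : Matrix n n α)) * (Y ⊗ₖ D - (1 : Matrix m m α) ⊗ₖ G)
        + (Δ ⊗ₖ (1 : Matrix n n α)) * (Z ⊗ₖ D) * (Δ ⊗ₖ (1 : Matrix n n α))
      = (X + Δ * Y + Y * Δ + Δ * Z * Δ) ⊗ₖ D := by
  rw [Matrix.add_mul, Matrix.mul_sub, one_kronecker_mul_kronecker_one,
    kronecker_one_mul_one_kronecker]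
  simp only [← mul_kronecker_mul, Matrix.mul_one, Matrix.one_mul, add_kronecker]
  abel

end Matrix

theorem generalized_DG_scaling_general {n : ℕ}
    (X Y Z : Matrix (Fin n) (Fin n) ℝ)
    (D : Matrix (Fin 2) (Fin 2) ℝ) (hD : D.PosDef)
    (G : Matrix (Fin 2) (Fin 2) ℝ)
    (Δ : Matrix (Fin n) (Fin n) ℝ)
    (hquad : (-(X + Δ * Y + Y * Δ + Δ * Z * Δ)).PosSemidef) :
    (-(X ⊗ₖ D
        + (Y ⊗ₖ D + (1 : Matrix (Fin n) (Fin n) ℝ) ⊗ₖ G)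
            * (Δ ⊗ₖ (1 : Matrix (Fin 2) (Fin 2) ℝ))
        + (Δ ⊗ₖ (1 : Matrix (Fin 2) (Fin 2) ℝ))
            * (Y ⊗ₖ D - (1 : Matrix (Fin n) (Fin n) ℝ) ⊗ₖ G)
        + (Δ ⊗ₖ (1 : Matrix (Fin 2) (Fin 2) ℝ)) * (Z ⊗ₖ D)
            * (Δ ⊗ₖ (1 : Matrix (Fin 2) (Fin 2) ℝ)))).PosSemidef := by
  rw [quadForm_kronecker_one, ← neg_kronecker]
  exact hquad.kronecker hD.posSemidef

theorem generalized_DG_scaling {n : ℕ}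
    (X Y Z : Matrix (Fin n) (Fin n) ℝ)
    (hX : Xᵀ = X) (hY : Yᵀ = Y) (hZ : Zᵀ = Z)
    (D : Matrix (Fin 2) (Fin 2) ℝ) (hD : D.PosDef) (hDsym : Dᵀ = D)
    (G : Matrix (Fin 2) (Fin 2) ℝ) (hG : Gᵀ = -G)
    (Δ : Matrix (Fin n) (Fin n) ℝ) (hΔ : Δᵀ = Δ)
    (hquad : (-(X + Δ * Y + Y * Δ + Δ * Z * Δ)).PosSemidef) :
    (-(X ⊗ₖ D
        + (Y ⊗ₖ D + (1 : Matrix (Fin n) (Fin n) ℝ) ⊗ₖ G)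
            * (Δ ⊗ₖ (1 : Matrix (Fin 2) (Fin 2) ℝ))
        + (Δ ⊗ₖ (1 : Matrix (Fin 2) (Fin 2) ℝ))
            * (Y ⊗ₖ D - (1 : Matrix (Fin n) (Fin n) ℝ) ⊗ₖ G)
        + (Δ ⊗ₖ (1 : Matrix (Fin 2) (Fin 2) ℝ)) * (Z ⊗ₖ D)
            * (Δ ⊗ₖ (1 : Matrix (Fin 2) (Fin 2) ℝ)))).PosSemidef :=
  generalized_DG_scaling_general X Y Z D hD G Δ hquad
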